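/- Let p and q be distinct primes and let G ≅ C_p × C_p × C_q. Then the reduced power graph P*(G) is not claw-free. -/

import Mathlib

/-- Adjacency in the power graph: the two elements are distinct and one of the
two cyclic subgroups they generate is contained in the other. -/
def PowAdj {G : Type*} [Group G] (a b : G) : Prop :=
  a ≠ b ∧ (a ∈ Subgroup.zpowers b ∨ b ∈ Subgroup.zpowers a)

/-- The reduced power graph `P*(G)`: the induced subgraph of the power graph
on the non-identity elements of `G`. -/
def reducedPowerGraph (G : Type*) [Group G] : SimpleGraph {g : G // g ≠ 1} where
  Adj a b := PowAdj (a : G) (b : G)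
  symm := by
    constructor
    intro a b h
    exact ⟨h.1.symm, h.2.symm⟩
  loopless := by
    constructor
    intro a h
    exact h.1 rfl

/-- A graph is claw-free if it has no vertex with three pairwise distinct,
pairwise non-adjacent neighbours. -/
def IsClawFree {V : Type*} (Γ : SimpleGraph V) : Prop :=
  ¬ ∃ b a₁ a₂ a₃ : V, a₁ ≠ a₂ ∧ a₁ ≠ a₃ ∧ a₂ ≠ a₃ ∧
      Γ.Adj b a₁ ∧ Γ.Adj b a₂ ∧ Γ.Adj b a₃ ∧
      ¬ Γ.Adj a₁ a₂ ∧ ¬ Γ.Adj a₁ a₃ ∧ ¬ Γ.Adj a₂ a₃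

lemma mem_zpowers_equiv {G H : Type*} [Group G] [Group H] (e : G ≃* H) (a b : G) :
    e a ∈ Subgroup.zpowers (e b) ↔ a ∈ Subgroup.zpowers b := by
  constructor
  · rintro hm
    obtain ⟨k, hk⟩ := Subgroup.mem_zpowers_iff.mp hm
    exact Subgroup.mem_zpowers_iff.mpr ⟨k, e.injective (by simpa [map_zpow] using hk)⟩
  · rintro hm
    obtain ⟨k, hk⟩ := Subgroup.mem_zpowers_iff.mp hm
    exact Subgroup.mem_zpowers_iff.mpr ⟨k, by rw [← map_zpow, hk]⟩

lemma powadj_equiv {G H : Type*} [Group G] [Group H] (e : G ≃* H) (a b : G) :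
    PowAdj (e a) (e b) ↔ PowAdj a b := by
  unfold PowAdj
  rw [mem_zpowers_equiv, mem_zpowers_equiv, e.injective.ne_iff]

theorem stmt_14 {G : Type*} [Group G] (p q : ℕ) (hp : p.Prime) (hq : q.Prime)
    (hpq : p ≠ q)
    (h : Nonempty (G ≃* Multiplicative (ZMod p × ZMod p × ZMod q))) :
    ¬ IsClawFree (reducedPowerGraph G) := by
  obtain ⟨e⟩ := h
  haveI := Fact.mk hp
  haveI := Fact.mk hq
  intro hcf
  set H := Multiplicative (ZMod p × ZMod p × ZMod q)
  have h1p : (1 : ZMod p) ≠ 0 := one_ne_zero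
  have h1q : (1 : ZMod q) ≠ 0 := one_ne_zero
  -- elements
  let b0 : H := Multiplicative.ofAdd (0, 0, 1)
  let x1 : H := Multiplicative.ofAdd (1, 0, 1)
  let x2 : H := Multiplicative.ofAdd (0, 1, 1)
  let x3 : H := Multiplicative.ofAdd (1, 1, 1)
  -- CRT integer
  have hco : Nat.Coprime p q := (Nat.coprime_primes hp hq).mpr hpq
  obtain ⟨k, hk⟩ := Nat.chineseRemainder hco 0 1
  have hkp : (k : ZMod p) = 0 := by
    have := (ZMod.natCast_eq_natCast_iff k 0 p).mpr hk.1
    simpa using this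
  have hkq : (k : ZMod q) = 1 := by
    have := (ZMod.natCast_eq_natCast_iff k 1 q).mpr hk.2
    simpa using this
  -- membership facts: b0 ∈ zpowers xi
  have hpow : ∀ u v : ZMod p, Multiplicative.ofAdd ((u, v, (1:ZMod q))) ^ (k : ℤ)
      = b0 := by
    intro u v
    rw [zpow_natCast, ← ofAdd_nsmul]
    show Multiplicative.ofAdd (k • u, k • v, k • (1:ZMod q)) = b0
    have : ∀ u : ZMod p, k • u = 0 := by
      intro u
      rw [nsmul_eq_mul, hkp, zero_mul]
    rw [this, this]
    have : k • (1 : ZMod q) = 1 := by rw [nsmul_eq_mul, hkq, mul_one]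
    rw [this]
  have hm1 : b0 ∈ Subgroup.zpowers x1 := Subgroup.mem_zpowers_iff.mpr ⟨k, hpow 1 0⟩
  have hm2 : b0 ∈ Subgroup.zpowers x2 := Subgroup.mem_zpowers_iff.mpr ⟨k, hpow 0 1⟩
  have hm3 : b0 ∈ Subgroup.zpowers x3 := Subgroup.mem_zpowers_iff.mpr ⟨k, hpow 1 1⟩
  -- nonidentity
  have hne : ∀ u v : ZMod p, ∀ w : ZMod q, w ≠ 0 →
      (Multiplicative.ofAdd ((u, v, w)) : H) ≠ 1 := by
    intro u v w hw heq
    have : ((u, v, w) : ZMod p × ZMod p × ZMod q) = 0 := by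
      simpa using heq
    exact hw (by simpa using congrArg (fun z => z.2.2) this)
  -- non-adjacency helper: componentwise analysis of zpowers membership
  have hzp : ∀ (x y : ZMod p × ZMod p × ZMod q),
      (Multiplicative.ofAdd y : H) ∈ Subgroup.zpowers (Multiplicative.ofAdd x) →
      ∃ m : ℤ, m • x = y := by
    intro x y hm
    obtain ⟨m, hm⟩ := Subgroup.mem_zpowers_iff.mp hm
    refine ⟨m, ?_⟩
    have := congrArg Multiplicative.toAdd hm
    simpa [toAdd_zpow] using this
  -- the claw lives in G via e.symm

  apply hcf
  refine ⟨⟨e.symm b0, ?_⟩, ⟨e.symm x1, ?_⟩, ⟨e.symm x2, ?_⟩, ⟨e.symm x3, ?_⟩, ?_, ?_, ?_, ?_, ?_, ?_, ?_, ?_, ?_⟩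
  · intro heq
    rw [← map_one e.symm] at heq
    exact hne 0 0 1 h1q (e.symm.injective heq)
  · intro heq
    rw [← map_one e.symm] at heq
    exact hne 1 0 1 h1q (e.symm.injective heq)
  · intro heq
    rw [← map_one e.symm] at heq
    exact hne 0 1 1 h1q (e.symm.injective heq)
  · intro heq
    rw [← map_one e.symm] at heq
    exact hne 1 1 1 h1q (e.symm.injective heq)
  all_goals
    simp only [ne_eq, Subtype.mk.injEq, EmbeddingLike.apply_eq_iff_eq,
      reducedPowerGraph]
  · -- x1 ≠ x2
    intro heq
    exact h1p (congrArg (fun z => (Multiplicative.toAdd z).1) heq)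
  · -- x1 ≠ x3
    intro heq
    exact h1p (congrArg (fun z => (Multiplicative.toAdd z).2.1) heq).symm
  · -- x2 ≠ x3
    intro heq
    exact h1p (congrArg (fun z => (Multiplicative.toAdd z).1) heq).symm
  · show PowAdj (e.symm b0) (e.symm x1)
    rw [← powadj_equiv e, e.apply_symm_apply, e.apply_symm_apply]
    refine ⟨fun heq => ?_, Or.inl hm1⟩
    exact h1p (congrArg (fun z => (Multiplicative.toAdd z).1) heq).symm
  · show PowAdj (e.symm b0) (e.symm x2)
    rw [← powadj_equiv e, e.apply_symm_apply, e.apply_symm_apply]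
    refine ⟨fun heq => ?_, Or.inl hm2⟩
    exact h1p (congrArg (fun z => (Multiplicative.toAdd z).2.1) heq).symm
  · show PowAdj (e.symm b0) (e.symm x3)
    rw [← powadj_equiv e, e.apply_symm_apply, e.apply_symm_apply]
    refine ⟨fun heq => ?_, Or.inl hm3⟩
    exact h1p (congrArg (fun z => (Multiplicative.toAdd z).1) heq).symm
  · show ¬ PowAdj (e.symm x1) (e.symm x2)
    rw [← powadj_equiv e, e.apply_symm_apply, e.apply_symm_apply]
    rintro ⟨-, hm | hm⟩
    · obtain ⟨m, hm⟩ := hzp _ _ hm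
      have h1 : m • (0 : ZMod p) = 1 := congrArg (fun z => z.1) hm
      rw [smul_zero] at h1
      exact h1p h1.symm
    · obtain ⟨m, hm⟩ := hzp _ _ hm
      have h2 : m • (0 : ZMod p) = 1 := congrArg (fun z => z.2.1) hm
      rw [smul_zero] at h2
      exact h1p h2.symm
  · show ¬ PowAdj (e.symm x1) (e.symm x3)
    rw [← powadj_equiv e, e.apply_symm_apply, e.apply_symm_apply]
    rintro ⟨-, hm | hm⟩
    · obtain ⟨m, hm⟩ := hzp _ _ hm
      have h1 : m • (1 : ZMod p) = 1 := congrArg (fun z => z.1) hm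
      have h2 : m • (1 : ZMod p) = 0 := congrArg (fun z => z.2.1) hm
      exact h1p (h1.symm.trans h2)
    · obtain ⟨m, hm⟩ := hzp _ _ hm
      have h2 : m • (0 : ZMod p) = 1 := congrArg (fun z => z.2.1) hm
      rw [smul_zero] at h2
      exact h1p h2.symm
  · show ¬ PowAdj (e.symm x2) (e.symm x3)
    rw [← powadj_equiv e, e.apply_symm_apply, e.apply_symm_apply]
    rintro ⟨-, hm | hm⟩
    · obtain ⟨m, hm⟩ := hzp _ _ hm
      have h1 : m • (1 : ZMod p) = 0 := congrArg (fun z => z.1) hm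
      have h2 : m • (1 : ZMod p) = 1 := congrArg (fun z => z.2.1) hm
      exact h1p (h2.symm.trans h1)
    · obtain ⟨m, hm⟩ := hzp _ _ hm
      have h1 : m • (0 : ZMod p) = 1 := congrArg (fun z => z.1) hm
      rw [smul_zero] at h1
      exact h1p h1.symm
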